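/- Every real polynomial p(x,y) of degree at most d satisfying p(x,y) = c (constant) on the line x+y=1 can be written uniquely as p = c(x+y)^d + sum over 0 <= j+k <= d-1 of c_{j,k} b_{j,k}, where b_{j,k}(x,y) = x^j y^k - x^j y^k (x+y)^{d-j-k}. -/

import Mathlib

/-!
Each `bPoly d j k` is the monomial `x^j y^k` of degree `< d` minus a form of degree `d`, and
`(x + y)^d` is a form of degree `d`. So the coefficients of degree `< d` of an expansion are exactly
its coefficients `c_{j,k}`, which gives uniqueness. For existence, take the `c_{j,k}` to be the
coefficients of `p` of degree `< d`: then `p` minus the expansion is homogeneous of degree `d` and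
vanishes on the line `x + y = 1`, hence on every point with `x + y ≠ 0` by scaling, hence is zero.
-/

open MvPolynomial

noncomputable def bPoly (d j k : ℕ) : MvPolynomial (Fin 2) ℝ :=
  X 0 ^ j * X 1 ^ k - X 0 ^ j * X 1 ^ k * (X 0 + X 1) ^ (d - j - k)

namespace MvPolynomial.IsHomogeneous

variable {σ R : Type*}

theorem eval_smul [CommSemiring R] {φ : MvPolynomial σ R} {n : ℕ} (hφ : φ.IsHomogeneous n)
    (s : R) (v : σ → R) : eval (s • v) φ = s ^ n * eval v φ := by
  rw [eval_eq, eval_eq, Finset.mul_sum]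
  refine Finset.sum_congr rfl fun m hm => ?_
  have hdeg : ∑ i ∈ m.support, m i = n := by
    simpa [Finsupp.weight_apply, Finsupp.sum] using hφ (mem_support_iff.mp hm)
  simp only [Pi.smul_apply, smul_eq_mul, mul_pow, Finset.prod_mul_distrib,
    Finset.prod_pow_eq_pow_sum, hdeg]
  ring

/-- Every point off the hyperplane `∑ i, v i = 0` is a multiple of a point of `∑ i, v i = 1`,
so `(∑ i, X i) * φ` vanishes everywhere. -/
theorem eq_zero_of_eval_eq_zero_of_sum_eq_one [Field R] [Infinite R] [Fintype σ] [Nonempty σ]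
    {φ : MvPolynomial σ R} {n : ℕ} (hφ : φ.IsHomogeneous n)
    (h : ∀ v : σ → R, ∑ i, v i = 1 → eval v φ = 0) : φ = 0 := by
  have hvanish : ∀ v : σ → R, ∑ i, v i ≠ 0 → eval v φ = 0 := by
    intro v hv
    have hscaled : ∑ i, ((∑ i, v i)⁻¹ • v) i = 1 := by
      simp [← Finset.mul_sum, hv]
    rw [← smul_inv_smul₀ hv v, hφ.eval_smul, h _ hscaled, mul_zero]
  have hmul : (∑ i, X i) * φ = 0 := MvPolynomial.funext fun v => by
    by_cases hv : ∑ i, v i = 0 <;> simp [hv, hvanish]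
  obtain ⟨i⟩ := ‹Nonempty σ›
  have hsum : (∑ i, X i : MvPolynomial σ R) ≠ 0 := by
    classical
    intro h0
    simpa using congrArg (eval (Pi.single i 1)) h0
  exact (mul_eq_zero.mp hmul).resolve_left hsum

end MvPolynomial.IsHomogeneous

theorem Finsupp.degree_fin_two (m : Fin 2 →₀ ℕ) : m.degree = m 0 + m 1 := by
  rw [Finsupp.degree_eq_sum, Fin.sum_univ_two]

theorem Finsupp.single_zero_add_single_one {M : Type*} [AddCommMonoid M] (m : Fin 2 →₀ M) :
    single 0 (m 0) + single 1 (m 1) = m := by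
  rw [← Fin.sum_univ_two (f := fun i => single i (m i)), Finsupp.univ_sum_single]

section BivariateExpansion

variable {R : Type*} [CommSemiring R]

theorem MvPolynomial.coeff_X_zero_pow_mul_X_one_pow (m : Fin 2 →₀ ℕ) (j k : ℕ) :
    coeff m (X 0 ^ j * X 1 ^ k : MvPolynomial (Fin 2) R) =
      if (m 0, m 1) = (j, k) then 1 else 0 := by
  rw [X_pow_eq_monomial, X_pow_eq_monomial, monomial_mul, one_mul, coeff_monomial]
  congr 1
  simp only [Finsupp.ext_iff, Fin.forall_fin_two, Prod.mk.injEq, Finsupp.add_apply,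
    Finsupp.single_apply]
  simp [eq_comm]

theorem MvPolynomial.isHomogeneous_X_zero_add_X_one_pow (n : ℕ) :
    ((X 0 + X 1 : MvPolynomial (Fin 2) R) ^ n).IsHomogeneous n := by
  simpa using ((isHomogeneous_X R 0).add (isHomogeneous_X R 1)).pow n

theorem MvPolynomial.isHomogeneous_X_zero_pow_mul_X_one_pow_mul {j k d : ℕ} (h : j + k ≤ d) :
    ((X 0 ^ j * X 1 ^ k * (X 0 + X 1) ^ (d - j - k) : MvPolynomial (Fin 2) R)).IsHomogeneous d := by
  have := ((isHomogeneous_X_pow (R := R) 0 j).mul (isHomogeneous_X_pow 1 k)).mul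
    (isHomogeneous_X_zero_add_X_one_pow (d - j - k))
  rwa [show j + k + (d - j - k) = d by omega] at this

end BivariateExpansion

noncomputable section

def lowIndices (d : ℕ) : Finset (ℕ × ℕ) :=
  (Finset.range d ×ˢ Finset.range d).filter fun jk => jk.1 + jk.2 < d

theorem mem_lowIndices {d : ℕ} {jk : ℕ × ℕ} : jk ∈ lowIndices d ↔ jk.1 + jk.2 < d := by
  simp only [lowIndices, Finset.mem_filter, Finset.mem_product, Finset.mem_range]
  omega

def bExpansion (d : ℕ) (c : ℝ) (f : ℕ × ℕ → ℝ) : MvPolynomial (Fin 2) ℝ :=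
  C c * (X 0 + X 1) ^ d + ∑ jk ∈ lowIndices d, C (f jk) * bPoly d jk.1 jk.2

def lowCoeffs (d : ℕ) (p : MvPolynomial (Fin 2) ℝ) (jk : ℕ × ℕ) : ℝ :=
  if jk.1 + jk.2 < d then coeff (Finsupp.single 0 jk.1 + Finsupp.single 1 jk.2) p else 0

theorem coeff_bExpansion_of_degree_ne {d : ℕ} (c : ℝ) (f : ℕ × ℕ → ℝ) {m : Fin 2 →₀ ℕ}
    (hm : m.degree ≠ d) :
    coeff m (bExpansion d c f) = if m 0 + m 1 < d then f (m 0, m 1) else 0 := by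
  have hb : ∀ jk ∈ lowIndices d, coeff m (C (f jk) * bPoly d jk.1 jk.2) =
      if (m 0, m 1) = jk then f jk else 0 := by
    intro jk hjk
    rw [coeff_C_mul, bPoly, coeff_sub,
      (isHomogeneous_X_zero_pow_mul_X_one_pow_mul (mem_lowIndices.mp hjk).le).coeff_eq_zero hm,
      sub_zero, coeff_X_zero_pow_mul_X_one_pow]
    split_ifs <;> simp
  rw [bExpansion, coeff_add, coeff_C_mul, (isHomogeneous_X_zero_add_X_one_pow d).coeff_eq_zero hm,
    mul_zero, zero_add, coeff_sum, Finset.sum_congr rfl hb, Finset.sum_ite_eq]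
  simp only [mem_lowIndices]

theorem eval_bPoly_of_add_eq_one (d j k : ℕ) {x y : ℝ} (hxy : x + y = 1) :
    eval ![x, y] (bPoly d j k) = 0 := by
  simp [bPoly, hxy]

theorem lowCoeffs_bExpansion {d : ℕ} (c : ℝ) {f : ℕ × ℕ → ℝ}
    (hf : ∀ jk : ℕ × ℕ, ¬ jk.1 + jk.2 < d → f jk = 0) :
    lowCoeffs d (bExpansion d c f) = f := by
  funext jk
  by_cases h : jk.1 + jk.2 < d
  · rw [lowCoeffs, if_pos h, coeff_bExpansion_of_degree_ne]
    · simp [h]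
    · simp [Finsupp.degree_fin_two, h.ne]
  · rw [lowCoeffs, if_neg h, hf jk h]

theorem eq_bExpansion_lowCoeffs {d : ℕ} {c : ℝ} {p : MvPolynomial (Fin 2) ℝ}
    (hdeg : p.totalDegree ≤ d) (hc : ∀ x y : ℝ, x + y = 1 → eval ![x, y] p = c) :
    p = bExpansion d c (lowCoeffs d p) := by
  set r := p - bExpansion d c (lowCoeffs d p)
  have hr : r.IsHomogeneous d := by
    intro m hm
    rw [Pi.one_def, ← Finsupp.degree_eq_weight_one]
    by_contra hne
    apply hm
    rw [coeff_sub, coeff_bExpansion_of_degree_ne c _ hne]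
    rcases lt_or_gt_of_ne hne with hlt | hgt
    · rw [Finsupp.degree_fin_two] at hlt
      simp [lowCoeffs, hlt, Finsupp.single_zero_add_single_one]
    · rw [coeff_eq_zero_of_totalDegree_lt (hdeg.trans_lt hgt)]
      rw [Finsupp.degree_fin_two] at hgt
      simp [not_lt.mpr hgt.le]
  have hline : ∀ v : Fin 2 → ℝ, ∑ i, v i = 1 → eval v r = 0 := by
    intro v hv
    rw [Fin.sum_univ_two] at hv
    have hv' : v = ![v 0, v 1] := by ext i; fin_cases i <;> rfl
    rw [hv', map_sub, hc _ _ hv, bExpansion, map_add, map_sum,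
      Finset.sum_eq_zero fun jk _ => by rw [map_mul, eval_bPoly_of_add_eq_one _ _ _ hv, mul_zero]]
    simp [hv]
  exact sub_eq_zero.mp (hr.eq_zero_of_eval_eq_zero_of_sum_eq_one hline)

end

theorem stmt_16 (d : ℕ) (c : ℝ) (p : MvPolynomial (Fin 2) ℝ)
    (hdeg : p.totalDegree ≤ d)
    (hc : ∀ x y : ℝ, x + y = 1 → MvPolynomial.eval ![x, y] p = c) :
    ∃! f : ℕ × ℕ → ℝ,
      (∀ jk : ℕ × ℕ, ¬ jk.1 + jk.2 < d → f jk = 0) ∧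
      p = C c * (X 0 + X 1) ^ d +
        ∑ jk ∈ (Finset.range d ×ˢ Finset.range d).filter
            (fun jk => jk.1 + jk.2 < d),
          C (f jk) * bPoly d jk.1 jk.2 := by
  refine ⟨lowCoeffs d p, ⟨fun jk h => if_neg h, eq_bExpansion_lowCoeffs hdeg hc⟩, ?_⟩
  rintro f ⟨hf, rfl⟩
  exact (lowCoeffs_bExpansion c hf).symm
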